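/- arXiv:2207.08595 — 2 statements merged into one kernel-verified Lean document; each statement's English description precedes it below -/
import Mathlib

section
/- If every finite power X^k of a topological space X is strongly star-Menger, then X has the strongly star-Scheepers property. -/
/-!
Given open covers `U n` of `X`, cover each power `X^k` by the boxes `u₀ × ⋯ × u_{k-1}` with
`uᵢ ∈ U n`. A finite set `{x₀, …, x_{k-1}}` is a single point of `X^k`, so strong star-Mengerness
of `X^k` puts it in the star of a finite set `F` with respect to some box cover; projecting `F` to
its coordinates yields a finite subset of `X` whose star with respect to `U n` contains every `xᵢ`.
Interleaving the countably many powers with `Nat.pair` gives a single sequence of finite sets.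
-/

open Set

/-- The dominating number 𝔡: least cardinality of a dominating family in ℕ^ℕ. -/
noncomputable def dominatingNumber : Cardinal :=
  sInf { c | ∃ D : Set (ℕ → ℕ),
    (∀ g : ℕ → ℕ, ∃ f ∈ D, ∀ᶠ n in Filter.atTop, g n ≤ f n) ∧ c = Cardinal.mk D }

/-- `U` is an open cover of the space `X`. -/
def IsOpenCover {X : Type*} [TopologicalSpace X] (U : Set (Set X)) : Prop :=
  (∀ u ∈ U, IsOpen u) ∧ ⋃₀ U = Set.univ

/-- The star of a set `A` with respect to a family `U`. -/
def starOf {X : Type*} (A : Set X) (U : Set (Set X)) : Set X :=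
  ⋃₀ {B | B ∈ U ∧ (A ∩ B).Nonempty}

/-- The star-Scheepers property (ω-cover form). -/
def StarScheepers (X : Type*) [TopologicalSpace X] : Prop :=
  ∀ U : ℕ → Set (Set X), (∀ n, IsOpenCover (U n)) →
    ∃ V : ℕ → Set (Set X), (∀ n, V n ⊆ U n ∧ (V n).Finite) ∧
      ∀ F : Set X, F.Finite → ∃ n, F ⊆ starOf (⋃₀ V n) (U n)

/-- The strongly star-Scheepers property. -/
def StronglyStarScheepers (X : Type*) [TopologicalSpace X] : Prop :=
  ∀ U : ℕ → Set (Set X), (∀ n, IsOpenCover (U n)) →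
    ∃ F : ℕ → Set X, (∀ n, (F n).Finite) ∧
      ∀ G : Set X, G.Finite → ∃ n, G ⊆ starOf (F n) (U n)

/-- The strongly star-Menger property. -/
def StronglyStarMenger (X : Type*) [TopologicalSpace X] : Prop :=
  ∀ U : ℕ → Set (Set X), (∀ n, IsOpenCover (U n)) →
    ∃ F : ℕ → Set X, (∀ n, (F n).Finite) ∧
      ∀ x : X, ∃ n, x ∈ starOf (F n) (U n)

section BoxCover

variable {X : Type*}

def boxCover (ι : Type*) (U : Set (Set X)) : Set (Set (ι → X)) :=
  (fun u => univ.pi u) '' univ.pi fun _ => U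

theorem IsOpenCover.boxCover [TopologicalSpace X] {ι : Type*} [Finite ι] {U : Set (Set X)}
    (hU : IsOpenCover U) : IsOpenCover (boxCover ι U) := by
  refine ⟨?_, eq_univ_of_forall fun g => ?_⟩
  · rintro _ ⟨u, hu, rfl⟩
    exact isOpen_set_pi finite_univ fun i _ => hU.1 _ (hu i trivial)
  · have hcov : ∀ i, ∃ u ∈ U, g i ∈ u := fun i => by
      rw [← mem_sUnion, hU.2]
      exact mem_univ _
    choose u hu hgu using hcov
    exact ⟨univ.pi u, ⟨u, fun i _ => hu i, rfl⟩, fun i _ => hgu i⟩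

theorem starOf_mono {A B : Set X} (hAB : A ⊆ B) (U : Set (Set X)) :
    starOf A U ⊆ starOf B U := by
  rintro x ⟨V, ⟨hV, y, hyA, hyV⟩, hxV⟩
  exact ⟨V, ⟨hV, y, hAB hyA, hyV⟩, hxV⟩

theorem apply_mem_starOf_image_of_mem_starOf_boxCover {ι : Type*} {U : Set (Set X)}
    {F : Set (ι → X)} {g : ι → X} (hg : g ∈ starOf F (boxCover ι U)) (i : ι) :
    g i ∈ starOf ((fun f => f i) '' F) U := by
  obtain ⟨_, ⟨⟨u, hu, rfl⟩, f, hfF, hfu⟩, hgu⟩ := hg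
  exact ⟨u i, ⟨hu i trivial, f i, mem_image_of_mem _ hfF, hfu i trivial⟩, hgu i trivial⟩

theorem StronglyStarMenger.exists_range_subset_starOf [TopologicalSpace X] {ι : Type*}
    [Finite ι] (h : StronglyStarMenger (ι → X)) {U : ℕ → Set (Set X)}
    (hU : ∀ n, IsOpenCover (U n)) :
    ∃ F : ℕ → Set X, (∀ n, (F n).Finite) ∧ ∀ g : ι → X, ∃ n, range g ⊆ starOf (F n) (U n) := by
  obtain ⟨F, hFfin, hFstar⟩ := h (fun n => boxCover ι (U n)) fun n => (hU n).boxCover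
  refine ⟨fun n => ⋃ i, (fun f => f i) '' F n, fun n => finite_iUnion fun i => (hFfin n).image _,
    fun g => ?_⟩
  obtain ⟨n, hn⟩ := hFstar g
  refine ⟨n, ?_⟩
  rintro _ ⟨i, rfl⟩
  exact starOf_mono (subset_iUnion_of_subset i subset_rfl) _
    (apply_mem_starOf_image_of_mem_starOf_boxCover hn i)

end BoxCover

theorem stmt_5 {X : Type*} [TopologicalSpace X]
    (h : ∀ k : ℕ, StronglyStarMenger (Fin k → X)) :
    StronglyStarScheepers X := by
  intro U hU
  choose F hFfin hFstar using fun k : ℕ =>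
    (h k).exists_range_subset_starOf fun m => hU (Nat.pair k m)
  refine ⟨fun n => F n.unpair.1 n.unpair.2, fun n => hFfin _ _, fun G hG => ?_⟩
  obtain ⟨k, g, -, rfl⟩ := hG.fin_param
  obtain ⟨m, hm⟩ := hFstar k g
  exact ⟨Nat.pair k m, by simpa only [Nat.unpair_pair] using hm⟩
end

section
/- If the Alexandroff duplicate AD(X) of a space X is star-Scheepers, then X is star-Scheepers. -/
open Set

/-- The topology of the Alexandroff duplicate AD(X) on X × Bool:
points (x, true) are isolated, and basic neighbourhoods of (x, false)
are (U × {false,true}) \ {(x, true)} for U an open neighbourhood of x. -/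
def ADTop (X : Type*) [TopologicalSpace X] : TopologicalSpace (X × Bool) :=
  TopologicalSpace.generateFrom
    ({S | ∃ x : X, S = {(x, true)}} ∪
     {S | ∃ (x : X) (U : Set X), IsOpen U ∧ x ∈ U ∧
        S = (U ×ˢ (Set.univ : Set Bool)) \ {(x, true)}})

/-!
The projection `AD(X) → X` is a continuous surjection, and the star-Scheepers property passes to
continuous images: pull the covers of `X` back to `AD(X)`, and push the finite subfamilies and the
stars they witness forward again, lifting a finite subset of `X` to a finite subset of `AD(X)`
through a section of the surjection.
-/

open Topology

section

variable {X Y : Type*}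

theorem IsOpenCover.preimage [TopologicalSpace X] [TopologicalSpace Y] {U : Set (Set X)}
    (hU : IsOpenCover U) {f : Y → X} (hf : Continuous f) : IsOpenCover (preimage f '' U) := by
  refine ⟨?_, ?_⟩
  · rintro _ ⟨u, hu, rfl⟩
    exact (hU.1 u hu).preimage hf
  · rw [sUnion_image, ← preimage_iUnion₂, ← sUnion_eq_biUnion, hU.2, preimage_univ]

theorem image_starOf_preimage_subset (f : Y → X) (U : Set (Set X)) {V : Set (Set Y)}
    (hV : V ⊆ preimage f '' U) :
    f '' starOf (⋃₀ V) (preimage f '' U) ⊆ starOf (⋃₀ {u | u ∈ U ∧ f ⁻¹' u ∈ V}) U := by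
  rintro _ ⟨y, ⟨_, ⟨⟨u, hu, rfl⟩, z, ⟨_, hsV, hzs⟩, hzu⟩, hyu⟩, rfl⟩
  obtain ⟨v, hv, rfl⟩ := hV hsV
  exact ⟨u, ⟨hu, f z, ⟨v, ⟨hv, hsV⟩, hzs⟩, hzu⟩, hyu⟩

theorem StarScheepers.of_continuous_surjective [TopologicalSpace X] [TopologicalSpace Y]
    (hY : StarScheepers Y) {f : Y → X} (hf : Continuous f) (hsurj : Function.Surjective f) :
    StarScheepers X := by
  intro U hU
  obtain ⟨V, hV, hVstar⟩ := hY (fun n => preimage f '' U n) fun n => (hU n).preimage hf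
  refine ⟨fun n => {u | u ∈ U n ∧ f ⁻¹' u ∈ V n}, fun n => ⟨fun u hu => hu.1, ?_⟩, ?_⟩
  · exact ((hV n).2.preimage (preimage_injective.mpr hsurj).injOn).subset fun u hu => hu.2
  · intro F hF
    obtain ⟨n, hn⟩ := hVstar _ (hF.image (Function.surjInv hsurj))
    refine ⟨n, fun x hx => image_starOf_preimage_subset f (U n) (hV n).1 ?_⟩
    exact ⟨_, hn (mem_image_of_mem _ hx), Function.surjInv_eq hsurj x⟩

theorem isOpen_prod_univ_ADTop [TopologicalSpace X] {u : Set X} (hu : IsOpen u) :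
    IsOpen[ADTop X] (u ×ˢ (univ : Set Bool)) := by
  rcases u.eq_empty_or_nonempty with rfl | ⟨x, hx⟩
  · simp
  -- the basic neighbourhood of `(x, false)` with the isolated point `(x, true)` put back
  have hxu : {(x, true)} ⊆ u ×ˢ (univ : Set Bool) := singleton_subset_iff.mpr ⟨hx, trivial⟩
  rw [← sdiff_union_of_subset hxu]
  refine @IsOpen.union _ _ _ (ADTop X) ?_ ?_ <;> apply TopologicalSpace.isOpen_generateFrom_of_mem
  exacts [Or.inr ⟨x, u, hu, hx, rfl⟩, Or.inl ⟨x, rfl⟩]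

theorem continuous_fst_ADTop [TopologicalSpace X] :
    Continuous[ADTop X, _] (Prod.fst : X × Bool → X) :=
  @continuous_def _ _ (ADTop X) _ _ |>.mpr fun _ hu => by
    rw [← prod_univ]
    exact isOpen_prod_univ_ADTop hu

end

theorem stmt_13 {X : Type*} [TopologicalSpace X]
    (h : @StarScheepers (X × Bool) (ADTop X)) :
    StarScheepers X :=
  @StarScheepers.of_continuous_surjective _ _ _ (ADTop X) h _ continuous_fst_ADTop
    Prod.fst_surjective
end
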